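/- Assume v > 2. Setting ν_j := 2(Var(U_0) − γ(j)), there exists a constant C' > 0 such that for all integers n ≥ 1 and 1 ≤ j ≤ n one has E[( Σ_{i=0}^{n−j} ((U_{i+j} − U_i)² − ν_j) )²] ≤ C' n j. -/

import Mathlib

open MeasureTheory ProbabilityTheory Filter Finset
open scoped ProbabilityTheory ENNReal NNReal BigOperators

namespace DepNoise

variable {Ω : Type*} [MeasureSpace Ω]

/-- Variance of `U 0`. -/
noncomputable def varU (U : ℕ → Ω → ℝ) : ℝ :=
  (∫ ω, (U 0 ω) ^ 2) - (∫ ω, U 0 ω) ^ 2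

/-- Autocovariance `γ(h) = Cov(U 0, U h)`. -/
noncomputable def gammaCov (U : ℕ → Ω → ℝ) (h : ℕ) : ℝ :=
  (∫ ω, U 0 ω * U h ω) - (∫ ω, U 0 ω) * (∫ ω, U h ω)

/-- The σ-algebra `σ(U 0, …, U k)`. -/
def pastSigma (U : ℕ → Ω → ℝ) (k : ℕ) : MeasurableSpace Ω :=
  ⨆ i : Fin (k + 1), MeasurableSpace.comap (U i) inferInstance

/-- The σ-algebra `σ(U m, U (m+1), …)`. -/
def futureSigma (U : ℕ → Ω → ℝ) (m : ℕ) : MeasurableSpace Ω :=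
  ⨆ i : ℕ, MeasurableSpace.comap (U (m + i)) inferInstance

/-!
Write `W i = (U (i + j) - U i) ^ 2`. By stationarity `E[W i] = ν_j` for every `i`, so the quantity
to bound is `Var (∑_{i ≤ n - j} W i) = ∑_{i, k} Cov (W i, W k)`. Since `W i` is measurable both
for `σ(U 0, …, U (i + j))` and for `σ(U i, U (i + 1), …)`, covariances at lag `d = |i - k| ≤ j`
are bounded by moments, while for `d > j` the strong mixing covariance inequality gives
`|Cov (W i, W k)| ≲ α(d - j) ^ (1/2) ≲ (d - j) ^ (-v/2)`. That inequality is Ibragimov's bound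
`4 a b α` for variables bounded by `a` and `b` (conditioning twice against the sign set of a
conditional expectation), combined with truncation at level `α ^ (-1/4)`, which costs sixth
moments of `W`, i.e. twelfth moments of `U`. As `v > 2` the lag bounds are summable, so each row
of the covariance matrix contributes `O(j)` and the total is `O(n j)`.
-/

def truncate (M x : ℝ) : ℝ := max (-M) (min M x)

lemma continuous_truncate (M : ℝ) : Continuous (truncate M) :=
  continuous_const.max (continuous_const.min continuous_id)

lemma abs_truncate_le {M : ℝ} (hM : 0 ≤ M) (x : ℝ) : |truncate M x| ≤ M :=
  abs_le.2 ⟨le_max_left _ _, max_le (by linarith) (min_le_left _ _)⟩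

lemma abs_truncate_le_abs {M : ℝ} (hM : 0 ≤ M) (x : ℝ) : |truncate M x| ≤ |x| := by
  unfold truncate
  rcases le_total x (-M) with h | h
  · rw [max_eq_left ((min_le_right _ _).trans h), abs_neg, abs_of_nonneg hM]
    exact le_abs.2 (Or.inr (by linarith))
  · rcases le_total M x with h' | h'
    · rw [min_eq_left h', max_eq_right (by linarith), abs_of_nonneg hM]
      exact h'.trans (le_abs_self x)
    · rw [min_eq_right h', max_eq_right h]

lemma sq_sub_truncate_le {M : ℝ} (hM : 0 < M) (x : ℝ) :
    (x - truncate M x) ^ 2 ≤ x ^ 6 / M ^ 4 := by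
  by_cases hx : |x| ≤ M
  · rw [truncate, min_eq_right (abs_le.1 hx).2, max_eq_right (abs_le.1 hx).1, sub_self,
      zero_pow two_ne_zero]
    positivity
  replace hx := not_le.1 hx
  have hsub : |x - truncate M x| ≤ |x| := by
    rcases le_or_gt 0 x with h₀ | h₀
    · rw [abs_of_nonneg h₀] at hx ⊢
      rw [truncate, min_eq_left hx.le, max_eq_right (by linarith), abs_of_nonneg (by linarith)]
      linarith
    · rw [abs_of_neg h₀] at hx ⊢
      rw [truncate, min_eq_right (by linarith), max_eq_left (by linarith),
        abs_of_nonpos (by linarith)]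
      linarith
  have hM4 : M ^ 4 ≤ x ^ 4 := by
    simpa only [(by decide : Even 4).pow_abs] using pow_le_pow_left₀ hM.le hx.le 4
  calc (x - truncate M x) ^ 2 ≤ x ^ 2 := sq_le_sq.2 (by simpa only [abs_abs] using hsub)
    _ = x ^ 2 * M ^ 4 / M ^ 4 := by field_simp
    _ ≤ x ^ 2 * x ^ 4 / M ^ 4 := by gcongr
    _ = x ^ 6 / M ^ 4 := by ring

section StrongMixing

variable {Ω : Type*} {m₁ m₂ m₀ : MeasurableSpace Ω} {μ : Measure Ω} {X Y : Ω → ℝ}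

/-- The strong mixing coefficient `α(m₁, m₂)` of two σ-algebras is at most `α`. -/
def StrongMixingLE (μ : Measure Ω) (m₁ m₂ : MeasurableSpace Ω) (α : ℝ) : Prop :=
  ∀ A B, MeasurableSet[m₁] A → MeasurableSet[m₂] B →
    |μ.real (A ∩ B) - μ.real A * μ.real B| ≤ α

lemma integrable_pow_of_memLp {n : ℕ} (hX : MemLp X n μ) (hn : Even n) (hn₀ : n ≠ 0) :
    Integrable (fun ω => X ω ^ n) μ := by
  simpa only [Real.norm_eq_abs, hn.pow_abs] using hX.integrable_norm_pow hn₀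

lemma memLp_of_integrable_abs_pow (hX : AEStronglyMeasurable X μ) {p : ℕ} (hp : p ≠ 0)
    (h : Integrable (fun ω => |X ω| ^ p) μ) : MemLp X p μ :=
  (integrable_norm_rpow_iff hX (by exact_mod_cast hp) (ENNReal.natCast_ne_top p)).1
    (by simpa only [Real.norm_eq_abs, ENNReal.toReal_natCast, Real.rpow_natCast] using h)

lemma integral_sub_pow_le {n : ℕ} (hn : Even n) (hX : Integrable (fun ω => X ω ^ n) μ)
    (hY : Integrable (fun ω => Y ω ^ n) μ) :
    ∫ ω, (X ω - Y ω) ^ n ∂μ ≤ 2 ^ (n - 1) * (∫ ω, X ω ^ n ∂μ + ∫ ω, Y ω ^ n ∂μ) := by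
  rw [← integral_add hX hY, ← integral_const_mul]
  refine integral_mono_of_nonneg (.of_forall fun ω => hn.pow_nonneg _)
    ((hX.add hY).const_mul _) (.of_forall fun ω => ?_)
  simpa only [sub_eq_add_neg, hn.neg_pow] using hn.add_pow_le (a := X ω) (b := -Y ω)

variable [IsProbabilityMeasure μ]

lemma variance_le_integral_of_sq_le {W : Ω → ℝ} (hX : AEStronglyMeasurable X μ)
    (hW : Integrable W μ) (h : ∀ ω, X ω ^ 2 ≤ W ω) : Var[X; μ] ≤ ∫ ω, W ω ∂μ :=
  (variance_le_expectation_sq hX).trans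
    (integral_mono_of_nonneg (.of_forall fun ω => sq_nonneg (X ω)) hW (.of_forall h))

lemma variance_le_integral_sq (hX : MemLp X 2 μ) : Var[X; μ] ≤ ∫ ω, X ω ^ 2 ∂μ :=
  variance_le_integral_of_sq_le hX.1 hX.integrable_sq fun _ => le_rfl

lemma variance_truncate_le {M : ℝ} (hM : 0 ≤ M) (hX : MemLp X 2 μ) :
    Var[fun ω => truncate M (X ω); μ] ≤ ∫ ω, X ω ^ 2 ∂μ :=
  variance_le_integral_of_sq_le ((continuous_truncate M).comp_aestronglyMeasurable hX.1)
    hX.integrable_sq fun ω => sq_le_sq.2 (by simpa only [abs_abs] using abs_truncate_le_abs hM _)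

lemma variance_sub_truncate_le {M : ℝ} (hM : 0 < M) (hX : MemLp X 6 μ) :
    Var[X - fun ω => truncate M (X ω); μ] ≤ (∫ ω, X ω ^ 6 ∂μ) / M ^ 4 := by
  rw [← integral_div]
  exact variance_le_integral_of_sq_le
    (hX.1.sub ((continuous_truncate M).comp_aestronglyMeasurable hX.1))
    ((integrable_pow_of_memLp hX (by decide) (by decide)).div_const _)
    fun ω => sq_sub_truncate_le hM (X ω)

lemma abs_covariance_le_mul_variance_add_variance_div (hX : MemLp X 2 μ) (hY : MemLp Y 2 μ)
    {t : ℝ} (ht : 0 < t) : |cov[X, Y; μ]| ≤ (t * Var[X; μ] + Var[Y; μ] / t) / 2 := by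
  have hadd := variance_add (hX.const_smul t) hY
  have hsub := variance_sub (hX.const_smul t) hY
  rw [variance_smul, covariance_smul_left] at hadd hsub
  have h₁ := variance_nonneg (t • X + Y) μ
  have h₂ := variance_nonneg (t • X - Y) μ
  have : (t * Var[X; μ] + Var[Y; μ] / t) / 2 = (t ^ 2 * Var[X; μ] + Var[Y; μ]) / (2 * t) := by
    field_simp
  rw [this, le_div_iff₀ (by positivity)]
  rcases abs_cases cov[X, Y; μ] with ⟨h, -⟩ | ⟨h, -⟩ <;> rw [h] <;> nlinarith

lemma integral_sq_sum_sub_integral_eq_sum_covariance {ι : Type*} {s : Finset ι}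
    {Z : ι → Ω → ℝ} (hZ : ∀ i ∈ s, MemLp (Z i) 2 μ) :
    ∫ ω, (∑ i ∈ s, (Z i ω - μ[Z i])) ^ 2 ∂μ = ∑ i ∈ s, ∑ k ∈ s, cov[Z i, Z k; μ] := by
  rw [← variance_fun_sum' hZ, variance_eq_integral
    (Finset.aemeasurable_fun_sum _ fun i hi => (hZ i hi).aemeasurable),
    integral_finsetSum _ fun i hi => (hZ i hi).integrable one_le_two]
  simp only [Finset.sum_sub_distrib]

lemma covariance_indicator_one {A B : Set Ω} (hA : MeasurableSet A) (hB : MeasurableSet B) :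
    cov[A.indicator 1, B.indicator 1; μ] = μ.real (A ∩ B) - μ.real A * μ.real B := by
  have hLp : ∀ {s : Set Ω}, MeasurableSet s → MemLp (s.indicator (1 : Ω → ℝ)) 2 μ :=
    fun hs => (memLp_const 1).indicator hs
  rw [covariance_eq_sub (hLp hA) (hLp hB), ← Set.inter_indicator_one]
  simp only [integral_indicator_one hA, integral_indicator_one hB,
    integral_indicator_one (hA.inter hB)]

lemma abs_covariance_le_mul_integral_abs_condExp_sub (hm : m₁ ≤ m₀) {a : ℝ}
    (hX : StronglyMeasurable[m₁] X) (hXa : ∀ ω, |X ω| ≤ a) (hY : MemLp Y 2 μ) :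
    |cov[X, Y; μ]| ≤ a * ∫ ω, |μ[Y|m₁] ω - μ[Y]| ∂μ := by
  have hX₀ : StronglyMeasurable X := hX.mono hm
  have hX2 : MemLp X 2 μ := .of_bound hX₀.aestronglyMeasurable a (.of_forall hXa)
  have hZc : Integrable (fun ω => μ[Y|m₁] ω - μ[Y]) μ :=
    integrable_condExp.sub (integrable_const _)
  have hcov : cov[X, Y; μ] = ∫ ω, X ω * (μ[Y|m₁] ω - μ[Y]) ∂μ := by
    have hXZ : Integrable (fun ω => X ω * μ[Y|m₁] ω) μ :=
      integrable_condExp.bdd_mul hX₀.aestronglyMeasurable (.of_forall hXa)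
    have hpull : ∫ ω, X ω * Y ω ∂μ = ∫ ω, X ω * μ[Y|m₁] ω ∂μ := by
      rw [← integral_condExp hm]
      exact integral_congr_ae (condExp_mul_of_stronglyMeasurable_left hX
        (hX2.integrable_mul hY) (hY.integrable one_le_two))
    simp_rw [mul_sub]
    rw [covariance_eq_sub hX2 hY, integral_sub hXZ ((hX2.integrable one_le_two).mul_const _),
      integral_mul_const]
    exact congrArg (· - _) hpull
  rw [hcov, ← integral_const_mul a]
  refine (Real.norm_eq_abs _).symm.trans_le
    (norm_integral_le_of_norm_le (hZc.abs.const_mul a) (.of_forall fun ω => ?_))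
  rw [Real.norm_eq_abs, abs_mul]
  exact mul_le_mul_of_nonneg_right (hXa ω) (abs_nonneg _)

lemma exists_integral_abs_condExp_sub_eq (hm : m₁ ≤ m₀) (hY : MemLp Y 2 μ) :
    ∃ A, MeasurableSet[m₁] A ∧
      ∫ ω, |μ[Y|m₁] ω - μ[Y]| ∂μ = 2 * cov[A.indicator 1, Y; μ] := by
  set c := μ[Y]
  set A := {ω | c ≤ μ[Y|m₁] ω}
  have hA : MeasurableSet[m₁] A :=
    measurableSet_le measurable_const stronglyMeasurable_condExp.measurable
  refine ⟨A, hA, ?_⟩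
  have hZc : Integrable (fun ω => μ[Y|m₁] ω - c) μ := integrable_condExp.sub (integrable_const c)
  have hpt : ∀ ω, |μ[Y|m₁] ω - c| =
      2 * A.indicator (fun ω => μ[Y|m₁] ω - c) ω - (μ[Y|m₁] ω - c) := by
    intro ω
    by_cases h : c ≤ μ[Y|m₁] ω
    · rw [Set.indicator_of_mem (show ω ∈ A from h), abs_of_nonneg (sub_nonneg.2 h)]; ring
    · rw [Set.indicator_of_notMem (show ω ∉ A from h), abs_of_neg (sub_neg.2 (not_le.1 h))]
      ring
  have hmean : ∫ ω, (μ[Y|m₁] ω - c) ∂μ = 0 := by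
    rw [integral_sub integrable_condExp (integrable_const c), integral_condExp hm]
    simp [c]
  have hcov : ∫ ω, A.indicator (fun ω => μ[Y|m₁] ω - c) ω ∂μ = cov[A.indicator 1, Y; μ] := by
    have hind : A.indicator (1 : Ω → ℝ) * Y = A.indicator Y := by
      ext ω; simp [Set.indicator_apply]
    rw [integral_indicator (hm _ hA), integral_sub integrable_condExp.integrableOn
      (integrable_const c).integrableOn, setIntegral_condExp hm (hY.integrable one_le_two) hA,
      setIntegral_const, covariance_eq_sub (show MemLp (A.indicator (1 : Ω → ℝ)) 2 μ from
        (memLp_const 1).indicator (hm _ hA)) hY, hind,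
      integral_indicator (hm _ hA), integral_indicator_one (hm _ hA)]
    simp [c, smul_eq_mul, mul_comm]
  rw [integral_congr_ae (.of_forall hpt),
    integral_sub ((hZc.indicator (hm _ hA)).const_mul 2) hZc, integral_const_mul, hmean, hcov,
    sub_zero]

theorem abs_covariance_le_of_strongMixingLE_of_bounded (hm₁ : m₁ ≤ m₀) (hm₂ : m₂ ≤ m₀)
    {α a b : ℝ} (hα : StrongMixingLE μ m₁ m₂ α) (hX : StronglyMeasurable[m₁] X)
    (hY : StronglyMeasurable[m₂] Y) (hXa : ∀ ω, |X ω| ≤ a) (hYb : ∀ ω, |Y ω| ≤ b) :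
    |cov[X, Y; μ]| ≤ 4 * a * b * α := by
  obtain ⟨ω₀⟩ := nonempty_of_isProbabilityMeasure μ
  have ha : 0 ≤ a := (abs_nonneg _).trans (hXa ω₀)
  have hb : 0 ≤ b := (abs_nonneg _).trans (hYb ω₀)
  have hY2 : MemLp Y 2 μ := .of_bound (hY.mono hm₂).aestronglyMeasurable b (.of_forall hYb)
  obtain ⟨A, hA, hY_A⟩ := exists_integral_abs_condExp_sub_eq hm₁ hY2
  have hA2 : MemLp (A.indicator (1 : Ω → ℝ)) 2 μ := (memLp_const 1).indicator (hm₁ _ hA)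
  obtain ⟨B, hB, hA_B⟩ := exists_integral_abs_condExp_sub_eq hm₂ hA2
  have hcovA : cov[A.indicator 1, Y; μ] ≤ 2 * b * α := calc
    cov[A.indicator 1, Y; μ] ≤ |cov[Y, A.indicator 1; μ]| :=
      covariance_comm (A.indicator 1) Y ▸ le_abs_self _
    _ ≤ b * ∫ ω, |μ[A.indicator 1|m₂] ω - μ[A.indicator 1]| ∂μ :=
      abs_covariance_le_mul_integral_abs_condExp_sub hm₂ hY hYb hA2
    _ = 2 * b * (μ.real (A ∩ B) - μ.real A * μ.real B) := by
      rw [hA_B, covariance_indicator_one (hm₂ _ hB) (hm₁ _ hA), Set.inter_comm]; ring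
    _ ≤ 2 * b * α := by gcongr; exact (le_abs_self _).trans (hα A B hA hB)
  calc |cov[X, Y; μ]| ≤ a * ∫ ω, |μ[Y|m₁] ω - μ[Y]| ∂μ :=
        abs_covariance_le_mul_integral_abs_condExp_sub hm₁ hX hXa hY2
    _ = 2 * a * cov[A.indicator 1, Y; μ] := by rw [hY_A]; ring
    _ ≤ 2 * a * (2 * b * α) := by gcongr
    _ = 4 * a * b * α := by ring

theorem abs_covariance_le_of_strongMixingLE_of_truncation (hm₁ : m₁ ≤ m₀) (hm₂ : m₂ ≤ m₀)
    {α K M : ℝ} (hα : StrongMixingLE μ m₁ m₂ α) (hX : StronglyMeasurable[m₁] X)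
    (hY : StronglyMeasurable[m₂] Y) (hX6 : MemLp X 6 μ) (hY6 : MemLp Y 6 μ)
    (hXK : ∫ ω, X ω ^ 2 ∂μ ≤ K) (hYK : ∫ ω, Y ω ^ 2 ∂μ ≤ K)
    (hXK' : ∫ ω, X ω ^ 6 ∂μ ≤ K) (hYK' : ∫ ω, Y ω ^ 6 ∂μ ≤ K) (hM : 0 < M) :
    |cov[X, Y; μ]| ≤ 2 * K / M ^ 2 + 4 * M ^ 2 * α := by
  set X' := fun ω => truncate M (X ω)
  set Y' := fun ω => truncate M (Y ω)
  have hX' : StronglyMeasurable[m₁] X' := (continuous_truncate M).comp_stronglyMeasurable hX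
  have hY' : StronglyMeasurable[m₂] Y' := (continuous_truncate M).comp_stronglyMeasurable hY
  have hX2 : MemLp X 2 μ := hX6.mono_exponent (by norm_num)
  have hY2 : MemLp Y 2 μ := hY6.mono_exponent (by norm_num)
  have hX'2 : MemLp X' 2 μ :=
    .of_bound (hX'.mono hm₁).aestronglyMeasurable M (.of_forall fun _ => abs_truncate_le hM.le _)
  have hY'2 : MemLp Y' 2 μ :=
    .of_bound (hY'.mono hm₂).aestronglyMeasurable M (.of_forall fun _ => abs_truncate_le hM.le _)
  have hsmall : ∀ {Z W : Ω → ℝ}, MemLp Z 2 μ → MemLp W 2 μ → Var[Z; μ] ≤ K / M ^ 4 →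
      Var[W; μ] ≤ K → |cov[Z, W; μ]| ≤ K / M ^ 2 := fun hZ hW hZK hWK => by
    refine (abs_covariance_le_mul_variance_add_variance_div hZ hW (pow_pos hM 2)).trans ?_
    have : M ^ 2 * (K / M ^ 4) = K / M ^ 2 := by field_simp
    have := mul_le_mul_of_nonneg_left hZK (pow_pos hM 2).le
    have := div_le_div_of_nonneg_right hWK (pow_pos hM 2).le
    linarith
  have h₁ : |cov[X - X', Y; μ]| ≤ K / M ^ 2 :=
    hsmall (hX2.sub hX'2) hY2 ((variance_sub_truncate_le hM hX6).trans (by gcongr))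
      ((variance_le_integral_sq hY2).trans hYK)
  have h₂ : |cov[Y - Y', X'; μ]| ≤ K / M ^ 2 :=
    hsmall (hY2.sub hY'2) hX'2 ((variance_sub_truncate_le hM hY6).trans (by gcongr))
      ((variance_truncate_le hM.le hX2).trans hXK)
  have h₃ : |cov[X', Y'; μ]| ≤ 4 * M * M * α :=
    abs_covariance_le_of_strongMixingLE_of_bounded hm₁ hm₂ hα hX' hY'
      (fun _ => abs_truncate_le hM.le _) (fun _ => abs_truncate_le hM.le _)
  have hsplit : cov[X, Y; μ] = cov[X - X', Y; μ] + cov[Y - Y', X'; μ] + cov[X', Y'; μ] := by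
    rw [covariance_sub_left hX2 hX'2 hY2, covariance_sub_left hY2 hY'2 hX'2,
      covariance_comm Y X', covariance_comm Y' X']
    ring
  calc |cov[X, Y; μ]|
      ≤ |cov[X - X', Y; μ]| + |cov[Y - Y', X'; μ]| + |cov[X', Y'; μ]| :=
        hsplit ▸ abs_add_three _ _ _
    _ ≤ K / M ^ 2 + K / M ^ 2 + 4 * M * M * α := add_le_add (add_le_add h₁ h₂) h₃
    _ = 2 * K / M ^ 2 + 4 * M ^ 2 * α := by ring

theorem abs_covariance_le_sqrt_of_strongMixingLE (hm₁ : m₁ ≤ m₀) (hm₂ : m₂ ≤ m₀)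
    {α K : ℝ} (hα₀ : 0 < α) (hα : StrongMixingLE μ m₁ m₂ α) (hX : StronglyMeasurable[m₁] X)
    (hY : StronglyMeasurable[m₂] Y) (hX6 : MemLp X 6 μ) (hY6 : MemLp Y 6 μ)
    (hXK : ∫ ω, X ω ^ 2 ∂μ ≤ K) (hYK : ∫ ω, Y ω ^ 2 ∂μ ≤ K)
    (hXK' : ∫ ω, X ω ^ 6 ∂μ ≤ K) (hYK' : ∫ ω, Y ω ^ 6 ∂μ ≤ K) :
    |cov[X, Y; μ]| ≤ (2 * K + 4) * √α := by
  have hs : 0 < √α := Real.sqrt_pos.2 hα₀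
  -- the truncation level `M = α ^ (-1/4)` balances the two terms
  have hM : 0 < √(√α)⁻¹ := Real.sqrt_pos.2 (inv_pos.2 hs)
  refine (abs_covariance_le_of_strongMixingLE_of_truncation hm₁ hm₂ hα hX hY hX6 hY6 hXK hYK
    hXK' hYK' hM).trans_eq ?_
  rw [Real.sq_sqrt (inv_nonneg.2 hs.le)]
  field_simp
  linear_combination (-4) * Real.sq_sqrt hα₀.le

end StrongMixing

lemma sum_range_sum_range_le_of_le_dist {g : ℕ → ℝ} (hg : ∀ d, 0 ≤ g d) {c : ℕ → ℕ → ℝ}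
    (hc : ∀ i k, c i k ≤ g (Nat.dist i k)) (N : ℕ) :
    ∑ i ∈ range N, ∑ k ∈ range N, c i k ≤ 2 * N * ∑ d ∈ range N, g d := by
  have hmono : ∀ {m}, m ≤ N → ∑ d ∈ range m, g d ≤ ∑ d ∈ range N, g d := fun h =>
    Finset.sum_le_sum_of_subset_of_nonneg (Finset.range_subset_range.2 h) fun d _ _ => hg d
  have hrow : ∀ i ∈ range N, ∑ k ∈ range N, c i k ≤ 2 * ∑ d ∈ range N, g d := by
    intro i hi
    have hiN := Finset.mem_range.1 hi
    have hleft : ∑ k ∈ range i, g (Nat.dist i k) ≤ ∑ d ∈ range N, g d := calc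
      ∑ k ∈ range i, g (Nat.dist i k) = ∑ k ∈ range i, g (i - 1 - k + 1) :=
        Finset.sum_congr rfl fun k hk => by
          have hki := Finset.mem_range.1 hk
          rw [Nat.dist_eq_sub_of_le_right hki.le]
          congr 1; omega
      _ = ∑ k ∈ range i, g (k + 1) := Finset.sum_range_reflect (fun k => g (k + 1)) i
      _ ≤ ∑ d ∈ range (i + 1), g d := by rw [Finset.sum_range_succ']; linarith [hg 0]
      _ ≤ ∑ d ∈ range N, g d := hmono hiN
    have hright : ∑ k ∈ Finset.Ico i N, g (Nat.dist i k) ≤ ∑ d ∈ range N, g d := calc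
      ∑ k ∈ Finset.Ico i N, g (Nat.dist i k) = ∑ d ∈ range (N - i), g d := by
        rw [Finset.sum_Ico_eq_sum_range]
        refine Finset.sum_congr rfl fun d _ => ?_
        rw [Nat.dist_eq_sub_of_le (Nat.le_add_right i d), Nat.add_sub_cancel_left]
      _ ≤ ∑ d ∈ range N, g d := hmono (Nat.sub_le N i)
    calc ∑ k ∈ range N, c i k ≤ ∑ k ∈ range N, g (Nat.dist i k) :=
          Finset.sum_le_sum fun k _ => hc i k
      _ = ∑ k ∈ range i, g (Nat.dist i k) + ∑ k ∈ Finset.Ico i N, g (Nat.dist i k) :=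
          (Finset.sum_range_add_sum_Ico _ hiN.le).symm
      _ ≤ 2 * ∑ d ∈ range N, g d := by linarith
  calc ∑ i ∈ range N, ∑ k ∈ range N, c i k ≤ ∑ i ∈ range N, 2 * ∑ d ∈ range N, g d :=
        Finset.sum_le_sum hrow
    _ = 2 * N * ∑ d ∈ range N, g d := by
        rw [Finset.sum_const, Finset.card_range, nsmul_eq_mul]; ring

noncomputable def lagBound (K c s : ℝ) (j d : ℕ) : ℝ :=
  if d ≤ j then K else c * ((d - j : ℕ) : ℝ) ^ (-s)

lemma lagBound_nonneg {K c : ℝ} (hK : 0 ≤ K) (hc : 0 ≤ c) (s : ℝ) (j d : ℕ) :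
    0 ≤ lagBound K c s j d := by
  unfold lagBound; split_ifs <;> positivity

lemma sum_range_lagBound_le {K c s : ℝ} (hK : 0 ≤ K) (hc : 0 ≤ c) (hs : 1 < s) (j N : ℕ) :
    ∑ d ∈ range N, lagBound K c s j d ≤ (j + 1) * K + c * ∑' h : ℕ, (h : ℝ) ^ (-s) := by
  have hsum : Summable fun h : ℕ => (h : ℝ) ^ (-s) := Real.summable_nat_rpow.2 (by linarith)
  have hnear : ∑ d ∈ range (j + 1), lagBound K c s j d = (j + 1) * K := by
    have hle : ∀ d ∈ range (j + 1), lagBound K c s j d = K := fun d hd =>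
      if_pos (Nat.lt_succ_iff.1 (Finset.mem_range.1 hd))
    rw [Finset.sum_congr rfl hle, Finset.sum_const, Finset.card_range, nsmul_eq_mul]
    push_cast; ring
  have hfar : ∑ d ∈ range N, lagBound K c s j (j + 1 + d) ≤ c * ∑' h : ℕ, (h : ℝ) ^ (-s) := by
    have hval : ∀ d, lagBound K c s j (j + 1 + d) = c * ((d + 1 : ℕ) : ℝ) ^ (-s) := fun d => by
      rw [lagBound, if_neg (by omega)]; congr 3; omega
    simp_rw [hval, ← Finset.mul_sum]
    gcongr
    calc ∑ d ∈ range N, ((d + 1 : ℕ) : ℝ) ^ (-s) ≤ ∑ h ∈ range (N + 1), (h : ℝ) ^ (-s) := by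
          rw [Finset.sum_range_succ']; linarith [Real.rpow_nonneg (Nat.cast_nonneg 0) (-s)]
      _ ≤ ∑' h : ℕ, (h : ℝ) ^ (-s) :=
          hsum.sum_le_tsum _ fun h _ => Real.rpow_nonneg (Nat.cast_nonneg h) _
  calc ∑ d ∈ range N, lagBound K c s j d ≤ ∑ d ∈ range (j + 1 + N), lagBound K c s j d :=
        Finset.sum_le_sum_of_subset_of_nonneg (Finset.range_subset_range.2 (by omega))
          fun d _ _ => lagBound_nonneg hK hc s j d
    _ ≤ (j + 1) * K + c * ∑' h : ℕ, (h : ℝ) ^ (-s) := by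
        rw [Finset.sum_range_add, hnear]; linarith

lemma measurable_pastSigma {Ω : Type*} {U : ℕ → Ω → ℝ} {i k : ℕ} (h : i ≤ k) :
    Measurable[pastSigma U k] (U i) :=
  Measurable.of_comap_le (le_iSup_of_le (⟨i, by omega⟩ : Fin (k + 1)) le_rfl)

lemma measurable_futureSigma {Ω : Type*} {U : ℕ → Ω → ℝ} {m i : ℕ} (h : m ≤ i) :
    Measurable[futureSigma U m] (U i) := by
  obtain ⟨d, rfl⟩ := Nat.exists_eq_add_of_le h
  exact Measurable.of_comap_le (le_iSup_of_le d le_rfl)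

def sqIncr {Ω : Type*} (U : ℕ → Ω → ℝ) (j i : ℕ) (ω : Ω) : ℝ := (U (i + j) ω - U i ω) ^ 2

lemma measurable_sqIncr_pastSigma {Ω : Type*} {U : ℕ → Ω → ℝ} (j i : ℕ) :
    Measurable[pastSigma U (i + j)] (sqIncr U j i) :=
  ((measurable_pastSigma le_rfl).sub (measurable_pastSigma (Nat.le_add_right i j))).pow_const 2

lemma measurable_sqIncr_futureSigma {Ω : Type*} {U : ℕ → Ω → ℝ} (j i : ℕ) :
    Measurable[futureSigma U i] (sqIncr U j i) :=
  ((measurable_futureSigma (Nat.le_add_right i j)).sub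
    (measurable_futureSigma le_rfl)).pow_const 2

section StationarySequence

variable {U : ℕ → Ω → ℝ}

lemma pastSigma_le (hU : ∀ i, Measurable (U i)) (k : ℕ) :
    pastSigma U k ≤ MeasureSpace.toMeasurableSpace :=
  iSup_le fun i => (hU i).comap_le

lemma futureSigma_le (hU : ∀ i, Measurable (U i)) (m : ℕ) :
    futureSigma U m ≤ MeasureSpace.toMeasurableSpace :=
  iSup_le fun i => (hU (m + i)).comap_le

def Stationary (U : ℕ → Ω → ℝ) : Prop :=
  ∀ k n : ℕ, Measure.map (fun ω => fun i : Fin (n + 1) => U (k + i) ω) ℙ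
    = Measure.map (fun ω => fun i : Fin (n + 1) => U i ω) ℙ

lemma Stationary.identDistrib_pair (hS : Stationary U) (hU : ∀ i, Measurable (U i))
    (k j : ℕ) :
    IdentDistrib (fun ω => (U k ω, U (k + j) ω)) (fun ω => (U 0 ω, U j ω)) ℙ ℙ := by
  have hblock : IdentDistrib (fun ω => fun i : Fin (j + 1) => U (k + i) ω)
      (fun ω => fun i : Fin (j + 1) => U i ω) ℙ ℙ :=
    ⟨(measurable_pi_lambda _ fun _ => hU _).aemeasurable,
      (measurable_pi_lambda _ fun _ => hU _).aemeasurable, hS k j⟩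
  simpa [Function.comp_def] using
    hblock.comp ((measurable_pi_apply 0).prodMk (measurable_pi_apply (Fin.last j)))

lemma Stationary.identDistrib (hS : Stationary U) (hU : ∀ i, Measurable (U i)) (k : ℕ) :
    IdentDistrib (U k) (U 0) ℙ ℙ :=
  (hS.identDistrib_pair hU k 0).comp measurable_fst

lemma Stationary.integral_pow_eq (hS : Stationary U) (hU : ∀ i, Measurable (U i)) (k p : ℕ) :
    ∫ ω, U k ω ^ p = ∫ ω, U 0 ω ^ p :=
  ((hS.identDistrib hU k).comp (measurable_id.pow_const p)).integral_eq

lemma Stationary.memLp (hS : Stationary U) (hU : ∀ i, Measurable (U i))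
    (hMom : ∀ p : ℕ, 1 ≤ p → Integrable (fun ω => |U 0 ω| ^ p) ℙ) (k p : ℕ) :
    MemLp (U k) p ℙ := by
  rcases Nat.eq_zero_or_pos p with rfl | hp
  · simpa using (hU k).aestronglyMeasurable
  · exact (hS.identDistrib hU k).memLp_iff.2
      (memLp_of_integrable_abs_pow (hU 0).aestronglyMeasurable hp.ne' (hMom p hp))

lemma Stationary.memLp_sqIncr (hS : Stationary U) (hU : ∀ i, Measurable (U i))
    (hMom : ∀ p : ℕ, 1 ≤ p → Integrable (fun ω => |U 0 ω| ^ p) ℙ) (j i p : ℕ) :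
    MemLp (sqIncr U j i) p ℙ := by
  have hmeas : Measurable (sqIncr U j i) := ((hU (i + j)).sub (hU i)).pow_const 2
  rcases Nat.eq_zero_or_pos p with rfl | hp
  · simpa using hmeas.aestronglyMeasurable
  refine memLp_of_integrable_abs_pow hmeas.aestronglyMeasurable hp.ne' ?_
  simpa only [sqIncr, Pi.sub_apply, abs_sq, ← pow_mul] using integrable_pow_of_memLp
    ((hS.memLp hU hMom (i + j) (2 * p)).sub (hS.memLp hU hMom i (2 * p))) (even_two_mul p)
    (by omega)

lemma Stationary.integral_sqIncr (hS : Stationary U) (hU : ∀ i, Measurable (U i))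
    (hMom : ∀ p : ℕ, 1 ≤ p → Integrable (fun ω => |U 0 ω| ^ p) ℙ) (j i : ℕ) :
    ∫ ω, sqIncr U j i ω = 2 * (varU U - gammaCov U j) := by
  have hL2 : ∀ k, MemLp (U k) 2 ℙ := fun k => by exact_mod_cast hS.memLp hU hMom k 2
  have hsum : Integrable (fun ω => U j ω ^ 2 + U 0 ω ^ 2) ℙ :=
    (hL2 j).integrable_sq.add (hL2 0).integrable_sq
  have hprod : Integrable (fun ω => 2 * (U 0 ω * U j ω)) ℙ :=
    ((hL2 0).integrable_mul (hL2 j)).const_mul 2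
  calc ∫ ω, sqIncr U j i ω = ∫ ω, (U j ω - U 0 ω) ^ 2 :=
        ((hS.identDistrib_pair hU i j).comp
          ((measurable_snd.sub measurable_fst).pow_const 2)).integral_eq
    _ = ∫ ω, (U j ω ^ 2 + U 0 ω ^ 2 - 2 * (U 0 ω * U j ω)) :=
        integral_congr_ae (.of_forall fun ω => by ring)
    _ = 2 * (varU U - gammaCov U j) := by
        rw [integral_sub hsum hprod, integral_add (hL2 j).integrable_sq (hL2 0).integrable_sq,
          integral_const_mul, varU, gammaCov, hS.integral_pow_eq hU j 2,
          (hS.identDistrib hU j).integral_eq]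
        ring

lemma Stationary.integral_sqIncr_pow_le (hS : Stationary U) (hU : ∀ i, Measurable (U i))
    (hMom : ∀ p : ℕ, 1 ≤ p → Integrable (fun ω => |U 0 ω| ^ p) ℙ) (j i : ℕ) {p : ℕ}
    (hp : p ≠ 0) : ∫ ω, sqIncr U j i ω ^ p ≤ 2 ^ (2 * p) * ∫ ω, U 0 ω ^ (2 * p) := by
  have hpow : ∀ k, Integrable (fun ω => U k ω ^ (2 * p)) ℙ := fun k =>
    integrable_pow_of_memLp (hS.memLp hU hMom k (2 * p)) (even_two_mul p) (by omega)
  simp only [sqIncr, ← pow_mul]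
  refine (integral_sub_pow_le (even_two_mul p) (hpow (i + j)) (hpow i)).trans_eq ?_
  rw [hS.integral_pow_eq hU (i + j), hS.integral_pow_eq hU i, ← two_mul, ← mul_assoc,
    ← pow_succ]
  congr 2
  omega

lemma Stationary.exists_integral_sqIncr_pow_le (hS : Stationary U) (hU : ∀ i, Measurable (U i))
    (hMom : ∀ p : ℕ, 1 ≤ p → Integrable (fun ω => |U 0 ω| ^ p) ℙ) :
    ∃ K, 0 ≤ K ∧ ∀ j i, ∫ ω, sqIncr U j i ω ^ 2 ≤ K ∧ ∫ ω, sqIncr U j i ω ^ 6 ≤ K := by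
  have hm4 : 0 ≤ ∫ ω, U 0 ω ^ 4 := integral_nonneg fun ω => by positivity
  have hm12 : 0 ≤ ∫ ω, U 0 ω ^ 12 := integral_nonneg fun ω => by positivity
  refine ⟨2 ^ 12 * ((∫ ω, U 0 ω ^ 4) + ∫ ω, U 0 ω ^ 12), by positivity, fun j i => ⟨?_, ?_⟩⟩
  · have : _ ≤ 2 ^ 4 * ∫ ω, U 0 ω ^ 4 := hS.integral_sqIncr_pow_le hU hMom j i two_ne_zero
    linarith
  · have : _ ≤ 2 ^ 12 * ∫ ω, U 0 ω ^ 12 :=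
      hS.integral_sqIncr_pow_le hU hMom j i (by norm_num : 6 ≠ 0)
    linarith

variable [IsProbabilityMeasure (ℙ : Measure Ω)]

theorem covariance_le_lagBound (hU : ∀ i, Measurable (U i)) {C v K : ℝ} (hC : 0 < C)
    (hMix : ∀ k h : ℕ, 1 ≤ h →
      StrongMixingLE ℙ (pastSigma U k) (futureSigma U (k + h)) (C * (h : ℝ) ^ (-v)))
    {j : ℕ} {Y : ℕ → Ω → ℝ} (hpast : ∀ i, Measurable[pastSigma U (i + j)] (Y i))
    (hfut : ∀ i, Measurable[futureSigma U i] (Y i)) (hY : ∀ i, MemLp (Y i) 6 ℙ)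
    (hK2 : ∀ i, ∫ ω, Y i ω ^ 2 ≤ K) (hK6 : ∀ i, ∫ ω, Y i ω ^ 6 ≤ K) (i k : ℕ) :
    cov[Y i, Y k; ℙ] ≤ lagBound K ((2 * K + 4) * √C) (v / 2) j (Nat.dist i k) := by
  wlog hik : i ≤ k generalizing i k
  · rw [covariance_comm, Nat.dist_comm]
    exact this k i (by omega)
  have hY2 : ∀ i, MemLp (Y i) 2 ℙ := fun i => (hY i).mono_exponent (by norm_num)
  rw [lagBound, Nat.dist_eq_sub_of_le hik]
  split_ifs with hnear
  · have := abs_covariance_le_mul_variance_add_variance_div (hY2 i) (hY2 k) one_pos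
    linarith [le_abs_self cov[Y i, Y k; ℙ], (variance_le_integral_sq (hY2 i)).trans (hK2 i),
      (variance_le_integral_sq (hY2 k)).trans (hK2 k)]
  obtain ⟨h, hh, rfl⟩ : ∃ h, 1 ≤ h ∧ k = i + j + h := ⟨k - i - j, by omega, by omega⟩
  have hh₀ : (0 : ℝ) < h := by exact_mod_cast hh
  have hcov := abs_covariance_le_sqrt_of_strongMixingLE (pastSigma_le hU _) (futureSigma_le hU _)
    (mul_pos hC (Real.rpow_pos_of_pos hh₀ _)) (hMix (i + j) h hh) (hpast i).stronglyMeasurable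
    (hfut (i + j + h)).stronglyMeasurable (hY i) (hY _) (hK2 i) (hK2 _) (hK6 i) (hK6 _)
  have hsqrt : √(C * (h : ℝ) ^ (-v)) = √C * (h : ℝ) ^ (-(v / 2)) := by
    rw [Real.sqrt_mul hC.le, Real.sqrt_eq_rpow ((h : ℝ) ^ (-v)), ← Real.rpow_mul hh₀.le]
    ring_nf
  rw [show i + j + h - i - j = h by omega, mul_assoc, ← hsqrt]
  exact (le_abs_self _).trans hcov

theorem Stationary.integral_sq_sum_sqIncr_sub_le (hS : Stationary U) (hU : ∀ i, Measurable (U i))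
    (hMom : ∀ p : ℕ, 1 ≤ p → Integrable (fun ω => |U 0 ω| ^ p) ℙ) {C v : ℝ} (hC : 0 < C)
    (hMix : ∀ k h : ℕ, 1 ≤ h →
      StrongMixingLE ℙ (pastSigma U k) (futureSigma U (k + h)) (C * (h : ℝ) ^ (-v)))
    (hv : 2 < v) {j : ℕ} {K : ℝ} (hK : 0 ≤ K) (hK2 : ∀ i, ∫ ω, sqIncr U j i ω ^ 2 ≤ K)
    (hK6 : ∀ i, ∫ ω, sqIncr U j i ω ^ 6 ≤ K) (N : ℕ) :
    ∫ ω, (∑ i ∈ range N, (sqIncr U j i ω - 2 * (varU U - gammaCov U j))) ^ 2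
      ≤ 2 * N * ((j + 1) * K + (2 * K + 4) * √C * ∑' h : ℕ, (h : ℝ) ^ (-(v / 2))) := by
  have hc : 0 ≤ (2 * K + 4) * √C := by positivity
  calc _ = ∑ i ∈ range N, ∑ k ∈ range N, cov[sqIncr U j i, sqIncr U j k; ℙ] := by
        rw [← integral_sq_sum_sub_integral_eq_sum_covariance fun i _ => by
          exact_mod_cast hS.memLp_sqIncr hU hMom j i 2]
        simp_rw [hS.integral_sqIncr hU hMom]
    _ ≤ 2 * N * ∑ d ∈ range N, lagBound K ((2 * K + 4) * √C) (v / 2) j d :=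
        sum_range_sum_range_le_of_le_dist (lagBound_nonneg hK hc _ j)
          (covariance_le_lagBound hU hC hMix (measurable_sqIncr_pastSigma j)
            (measurable_sqIncr_futureSigma j) (fun i => hS.memLp_sqIncr hU hMom j i 6) hK2 hK6) N
    _ ≤ _ := by
        gcongr
        exact sum_range_lagBound_le hK hc (by linarith) j N

end StationarySequence

theorem squared_increments_variance_bound_general
    {Ω : Type*} [MeasureSpace Ω] [IsProbabilityMeasure (ℙ : Measure Ω)]
    (U : ℕ → Ω → ℝ)
    (hMeas : ∀ i, Measurable (U i))
    (hStat : ∀ k n : ℕ,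
      Measure.map (fun ω => fun i : Fin (n + 1) => U (k + i) ω) ℙ
        = Measure.map (fun ω => fun i : Fin (n + 1) => U i ω) ℙ)
    (hMom : ∀ p : ℕ, 1 ≤ p → Integrable (fun ω => |U 0 ω| ^ p) ℙ)
    (C v : ℝ) (hC : 0 < C)
    (hMix : ∀ k h : ℕ, 1 ≤ h → ∀ A B : Set Ω,
      MeasurableSet[pastSigma U k] A → MeasurableSet[futureSigma U (k + h)] B →
      |(ℙ (A ∩ B)).toReal - (ℙ A).toReal * (ℙ B).toReal| ≤ C * (h : ℝ) ^ (-v))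
    (hv : 2 < v) :
    ∃ C' > (0 : ℝ), ∀ n j : ℕ, 1 ≤ n → 1 ≤ j → j ≤ n →
      ∫ ω, (∑ i ∈ Finset.range (n - j + 1),
          ((U (i + j) ω - U i ω) ^ 2 - 2 * (varU U - gammaCov U j))) ^ 2 ∂ℙ
        ≤ C' * n * j := by
  have hS : Stationary U := hStat
  obtain ⟨K, hK, hKmom⟩ := hS.exists_integral_sqIncr_pow_le hMeas hMom
  set B := (2 * K + 4) * √C * ∑' h : ℕ, (h : ℝ) ^ (-(v / 2))
  have hB : 0 ≤ B :=
    mul_nonneg (by positivity) (tsum_nonneg fun h => Real.rpow_nonneg (Nat.cast_nonneg h) _)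
  refine ⟨4 * K + 2 * B + 1, by positivity, fun n j hn hj hjn => ?_⟩
  have hN : ((n - j + 1 : ℕ) : ℝ) ≤ n := by exact_mod_cast (by omega : n - j + 1 ≤ n)
  have hj₁ : (1 : ℝ) ≤ j := by exact_mod_cast hj
  have hn₀ : (0 : ℝ) ≤ n := Nat.cast_nonneg n
  calc _ ≤ 2 * ((n - j + 1 : ℕ) : ℝ) * ((j + 1) * K + B) :=
        hS.integral_sq_sum_sqIncr_sub_le hMeas hMom hC hMix hv hK (fun i => (hKmom j i).1)
          (fun i => (hKmom j i).2) (n - j + 1)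
    _ ≤ (4 * K + 2 * B + 1) * n * j := by
        nlinarith [mul_le_mul_of_nonneg_right hN (by positivity : (0 : ℝ) ≤ (j + 1) * K + B),
          mul_nonneg (mul_nonneg hK hn₀) (sub_nonneg.2 hj₁),
          mul_nonneg (mul_nonneg hB hn₀) (sub_nonneg.2 hj₁),
          mul_nonneg hn₀ (hj₁.trans' zero_le_one)]

/-- assuming `v > 2`, with `ν_j := 2(Var(U_0) − γ(j))`,
`E[(Σ_{i=0}^{n−j} ((U_{i+j} − U_i)² − ν_j))²] ≤ C' n j`. -/
theorem squared_increments_variance_bound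
    {Ω : Type*} [MeasureSpace Ω] [IsProbabilityMeasure (ℙ : Measure Ω)]
    (U : ℕ → Ω → ℝ)
    (hMeas : ∀ i, Measurable (U i))
    (hStat : ∀ k n : ℕ,
      Measure.map (fun ω => fun i : Fin (n + 1) => U (k + i) ω) ℙ
        = Measure.map (fun ω => fun i : Fin (n + 1) => U i ω) ℙ)
    (hSymm : Measure.map (U 0) ℙ = Measure.map (fun ω => -U 0 ω) ℙ)
    (hMom : ∀ p : ℕ, 1 ≤ p → Integrable (fun ω => |U 0 ω| ^ p) ℙ)
    (C v : ℝ) (hC : 0 < C)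
    (hMix : ∀ k h : ℕ, 1 ≤ h → ∀ A B : Set Ω,
      MeasurableSet[pastSigma U k] A → MeasurableSet[futureSigma U (k + h)] B →
      |(ℙ (A ∩ B)).toReal - (ℙ A).toReal * (ℙ B).toReal| ≤ C * (h : ℝ) ^ (-v))
    (hv : 2 < v) :
    ∃ C' > (0 : ℝ), ∀ n j : ℕ, 1 ≤ n → 1 ≤ j → j ≤ n →
      ∫ ω, (∑ i ∈ Finset.range (n - j + 1),
          ((U (i + j) ω - U i ω) ^ 2 - 2 * (varU U - gammaCov U j))) ^ 2 ∂ℙ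
        ≤ C' * n * j :=
  squared_increments_variance_bound_general U hMeas hStat hMom C v hC hMix hv

end DepNoise
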